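/- Let M_1,...,M_m be closed linear subspaces of a real Hilbert space H with intersection M, T := P_{M_m} ⋯ P_{M_1}. Given that sup_k k·‖T^k(I−T)‖ < ∞ implies corresponding decay along iterates: if for some p ≥ 2 and ε > 0 one has ‖T^k(x) − P_M(x)‖ = o(k^{−p−ε}) for all x ∈ M ⊕ (I−T)^p(H), then ‖T^k(x) − P_M(x)‖ = o(k^{−(p−1)−ε/2}) for all x ∈ M ⊕ (I−T)^{p−1}(H). -/

import Mathlib

noncomputable section
set_option linter.unusedSectionVars false
open Filter RealInnerProductSpace

variable {H : Type} [NormedAddCommGroup H] [InnerProductSpace ℝ H] [CompleteSpace H]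

/-- The orthogonal projection onto a subspace `K`, viewed as an operator `H →L[ℝ] H`. -/
def projL (K : Submodule ℝ H) [K.HasOrthogonalProjection] : H →L[ℝ] H :=
  K.subtypeL.comp K.orthogonalProjectionOnto

/-- The product `P_{m-1} ∘ ⋯ ∘ P_0` of the operators `P i` (so `P 0` acts first);
for `P i = projL (M i)` this is the cyclic-projections operator `T = P_{M_m} ⋯ P_{M_1}`. -/
def cyclicProd {E : Type} [NormedAddCommGroup E] [NormedSpace ℝ E] {m : ℕ}
    (P : Fin m → (E →L[ℝ] E)) : E →L[ℝ] E :=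
  (List.ofFn P).foldl (fun acc p => p.comp acc) (ContinuousLinearMap.id ℝ E)

instance iInfCompleteSpace {E : Type} [NormedAddCommGroup E] [InnerProductSpace ℝ E]
    [CompleteSpace E] {m : ℕ} (M : Fin m → Submodule ℝ E) [∀ i, CompleteSpace (M i)] :
    CompleteSpace (⨅ i, M i : Submodule ℝ E) := by
  have hM : ∀ i, IsClosed (M i : Set E) := fun i =>
    (completeSpace_coe_iff_isComplete.mp inferInstance).isClosed
  have h : IsClosed ((⨅ i, M i : Submodule ℝ E) : Set E) := by
    rw [Submodule.coe_iInf]; exact isClosed_iInter hM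
  exact h.completeSpace_coe

section Chain
variable {E : Type} [NormedAddCommGroup E] [NormedSpace ℝ E]

def chainOp (l : List (E →L[ℝ] E)) : E →L[ℝ] E :=
  l.foldl (fun acc p => p.comp acc) (ContinuousLinearMap.id ℝ E)
end Chain



variable {H : Type} [NormedAddCommGroup H] [InnerProductSpace ℝ H] [CompleteSpace H]

lemma norm_projL_le (K : Submodule ℝ H) [K.HasOrthogonalProjection] (x : H) :
    ‖projL K x‖ ≤ ‖x‖ := by
  calc ‖projL K x‖ = ‖K.orthogonalProjectionOnto x‖ := rfl
    _ ≤ ‖K.orthogonalProjectionOnto‖ * ‖x‖ := (K.orthogonalProjectionOnto).le_opNorm x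
    _ ≤ 1 * ‖x‖ := by
        apply mul_le_mul_of_nonneg_right K.orthogonalProjectionOnto_norm_le (norm_nonneg x)
    _ = ‖x‖ := one_mul _

lemma projL_of_mem (K : Submodule ℝ H) [K.HasOrthogonalProjection] {x : H} (hx : x ∈ K) :
    projL K x = x := by
  exact K.starProjection_eq_self_iff.mpr hx

lemma projL_mem (K : Submodule ℝ H) [K.HasOrthogonalProjection] (x : H) : projL K x ∈ K :=
  (K.orthogonalProjectionOnto x).2

lemma projL_fix_of_norm_eq (K : Submodule ℝ H) [K.HasOrthogonalProjection] (x : H)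
    (hx : ‖projL K x‖ = ‖x‖) : projL K x = x := by
  have h1 : ⟪x - projL K x, (projL K x : H)⟫ = 0 :=
    K.starProjection_inner_eq_zero x _ (K.orthogonalProjectionOnto x).2
  have h2 : ‖x‖ ^ 2 = ‖projL K x‖ ^ 2 + ‖x - projL K x‖ ^ 2 := by
    have h3 := norm_add_sq_real (projL K x) (x - projL K x)
    rw [real_inner_comm] at h1
    rw [h1] at h3
    simpa [add_sub_cancel] using h3
  rw [hx] at h2
  have h4 : ‖x - projL K x‖ = 0 := by
    have : ‖x - projL K x‖ ^ 2 = 0 := by linarith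
    exact pow_eq_zero_iff (by norm_num) |>.mp this
  rw [norm_eq_zero, sub_eq_zero] at h4
  exact h4.symm

lemma projL_projL_of_le {K K' : Submodule ℝ H} [K.HasOrthogonalProjection]
    [K'.HasOrthogonalProjection] (h : K ≤ K') (x : H) : projL K (projL K' x) = projL K x := by
  have := Submodule.orthogonalProjectionOnto_starProjection_of_le h x
  show ((K.orthogonalProjectionOnto (K'.starProjection x) : H)) = K.orthogonalProjectionOnto x
  rw [this]



section Chain
variable {E : Type} [NormedAddCommGroup E] [NormedSpace ℝ E]

lemma chainOp_foldl (l : List (E →L[ℝ] E)) (s : E →L[ℝ] E) :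
    l.foldl (fun acc p => p.comp acc) s = (chainOp l).comp s := by
  induction l generalizing s with
  | nil => simp [chainOp]
  | cons P l ih =>
      simp only [List.foldl_cons, chainOp]
      rw [ih, ih (P.comp (ContinuousLinearMap.id ℝ E))]
      ext x; simp

lemma chainOp_cons (P : E →L[ℝ] E) (l : List (E →L[ℝ] E)) :
    chainOp (P :: l) = (chainOp l).comp P := by
  show List.foldl _ _ _ = _
  rw [List.foldl_cons, chainOp_foldl]
  ext x; simp

lemma chainOp_concat (l : List (E →L[ℝ] E)) (P : E →L[ℝ] E) :
    chainOp (l ++ [P]) = P.comp (chainOp l) := by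
  show List.foldl _ _ _ = _
  rw [List.foldl_append]
  rfl

lemma norm_chainOp_le (l : List (E →L[ℝ] E)) (hl : ∀ P ∈ l, ∀ x : E, ‖P x‖ ≤ ‖x‖) (x : E) :
    ‖chainOp l x‖ ≤ ‖x‖ := by
  induction l generalizing x with
  | nil => simp [chainOp]
  | cons P l ih =>
      rw [chainOp_cons]
      calc ‖chainOp l (P x)‖ ≤ ‖P x‖ := ih (fun Q hQ => hl Q (List.mem_cons_of_mem _ hQ)) _
        _ ≤ ‖x‖ := hl P (List.mem_cons_self) x

lemma chainOp_fixed (l : List (E →L[ℝ] E)) {v : E} (hv : ∀ P ∈ l, P v = v) :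
    chainOp l v = v := by
  induction l with
  | nil => simp [chainOp]
  | cons P l ih =>
      rw [chainOp_cons]
      simp only [ContinuousLinearMap.comp_apply, hv P (List.mem_cons_self)]
      exact ih fun Q hQ => hv Q (List.mem_cons_of_mem _ hQ)

lemma fix_of_chainOp_fix (l : List (E →L[ℝ] E))
    (hle : ∀ P ∈ l, ∀ x : E, ‖P x‖ ≤ ‖x‖)
    (heq : ∀ P ∈ l, ∀ x : E, ‖P x‖ = ‖x‖ → P x = x)
    {v : E} (hv : chainOp l v = v) : ∀ P ∈ l, P v = v := by
  induction l using List.reverseRecOn with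
  | nil => simp
  | append_singleton l P ih =>
      rw [chainOp_concat] at hv
      have hle' : ∀ Q ∈ l, ∀ x : E, ‖Q x‖ ≤ ‖x‖ :=
        fun Q hQ => hle Q (List.mem_append_left _ hQ)
      have h1 : ‖chainOp l v‖ ≤ ‖v‖ := norm_chainOp_le l hle' v
      have h2 : ‖v‖ ≤ ‖chainOp l v‖ := by
        conv_lhs => rw [← hv]
        exact hle P (List.mem_append_right _ (List.mem_singleton_self _)) _
      have h3 : ‖P (chainOp l v)‖ = ‖chainOp l v‖ := by
        rw [show P (chainOp l v) = v from hv]; linarith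
      have h4 : P (chainOp l v) = chainOp l v :=
        heq P (List.mem_append_right _ (List.mem_singleton_self _)) _ h3
      have hv' : P (chainOp l v) = v := hv
      have h5 : chainOp l v = v := by rw [← h4, hv']
      intro Q hQ
      rcases List.mem_append.mp hQ with hQ | hQ
      · exact ih hle' (fun Q hQ => heq Q (List.mem_append_left _ hQ)) h5 Q hQ
      · rw [List.mem_singleton.mp hQ]; rw [h5] at h4; exact h4

lemma chainOp_mapped (l : List (E →L[ℝ] E)) (F : E →L[ℝ] E)
    (hl : ∀ P ∈ l, ∀ x : E, F (P x) = F x) (x : E) : F (chainOp l x) = F x := by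
  induction l generalizing x with
  | nil => simp [chainOp]
  | cons P l ih =>
      rw [chainOp_cons]
      simp only [ContinuousLinearMap.comp_apply]
      rw [ih (fun Q hQ => hl Q (List.mem_cons_of_mem _ hQ)), hl P (List.mem_cons_self)]
end Chain


set_option maxHeartbeats 1000000 in
/-- With `T = P_{M_m} ⋯ P_{M_1}`, `M = ⋂ᵢ Mᵢ` and
`X_p = M ⊕ (I − T)^p(H)`: if for some `p ≥ 2` and `ε > 0` one has
`‖T^k(x) − P_M(x)‖ = o(k^{−p−ε})` for all `x ∈ X_p`, then
`‖T^k(x) − P_M(x)‖ = o(k^{−(p−1)−ε/2})` for all `x ∈ X_{p−1}`. -/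
theorem decay_step_down {m : ℕ} (M : Fin m → Submodule ℝ H)
    [∀ i, CompleteSpace (M i)] (p : ℕ) (hp : 2 ≤ p) (ε : ℝ) (hε : 0 < ε)
    (h : ∀ x : H,
      (∃ u ∈ (⨅ i, M i : Submodule ℝ H), ∃ w : H,
          x = u + ((1 - cyclicProd fun i : Fin m => projL (M i)) ^ p) w) →
      Tendsto
        (fun k : ℕ =>
          (k : ℝ) ^ ((p : ℝ) + ε) *
            ‖((cyclicProd fun i : Fin m => projL (M i)) ^ k) x - projL (⨅ i, M i) x‖)
        atTop (nhds 0)) :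
    ∀ x : H,
      (∃ u ∈ (⨅ i, M i : Submodule ℝ H), ∃ w : H,
          x = u + ((1 - cyclicProd fun i : Fin m => projL (M i)) ^ (p - 1)) w) →
      Tendsto
        (fun k : ℕ =>
          (k : ℝ) ^ (((p : ℝ) - 1) + ε / 2) *
            ‖((cyclicProd fun i : Fin m => projL (M i)) ^ k) x - projL (⨅ i, M i) x‖)
        atTop (nhds 0) := by
  intro x hxmem
  obtain ⟨u, hu, w, hx⟩ := hxmem
  set T : H →L[ℝ] H := cyclicProd fun i : Fin m => projL (M i) with hTdef
  set Minf : Submodule ℝ H := ⨅ i, M i with hMdef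
  set PM : H →L[ℝ] H := projL Minf with hPMdef
  set l : List (H →L[ℝ] H) := List.ofFn fun i : Fin m => projL (M i) with hldef
  have hTc : T = chainOp l := rfl
  -- membership characterization
  have hmem : ∀ P ∈ l, ∃ i : Fin m, P = projL (M i) := by
    intro P hP
    rw [hldef, List.mem_ofFn] at hP
    obtain ⟨i, hi⟩ := hP
    exact ⟨i, hi.symm⟩
  have hle : ∀ P ∈ l, ∀ x : H, ‖P x‖ ≤ ‖x‖ := by
    intro P hP x; obtain ⟨i, rfl⟩ := hmem P hP; exact norm_projL_le _ x
  have heqfix : ∀ P ∈ l, ∀ x : H, ‖P x‖ = ‖x‖ → P x = x := by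
    intro P hP x hx; obtain ⟨i, rfl⟩ := hmem P hP; exact projL_fix_of_norm_eq _ x hx
  -- T fixes Minf
  have hTfix : ∀ v ∈ Minf, T v = v := by
    intro v hv
    rw [hTc]
    exact chainOp_fixed l fun P hP => by
      obtain ⟨i, rfl⟩ := hmem P hP
      exact projL_of_mem _ ((Submodule.mem_iInf _).mp hv i)
  have hTkfix : ∀ k : ℕ, ∀ v ∈ Minf, (T ^ k) v = v := by
    intro k v hv
    induction k with
    | zero => simp
    | succ n ih => rw [pow_succ, ContinuousLinearMap.mul_apply, hTfix v hv, ih]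
  -- PM ∘ T = PM
  have hPMT : ∀ x : H, PM (T x) = PM x := by
    intro x
    rw [hTc]
    refine chainOp_mapped l PM ?_ x
    intro P hP y
    obtain ⟨i, rfl⟩ := hmem P hP
    exact projL_projL_of_le (iInf_le M i) y
  have hPMTk : ∀ (k : ℕ) (x : H), PM ((T ^ k) x) = PM x := by
    intro k
    induction k with
    | zero => intro x; simp
    | succ n ih => intro x; rw [pow_succ, ContinuousLinearMap.mul_apply, ih (T x), hPMT]
  -- fixed points of T lie in Minf
  have hfixmem : ∀ v : H, T v = v → v ∈ Minf := by
    intro v hv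
    rw [hTc] at hv
    have := fix_of_chainOp_fix l hle heqfix hv
    refine (Submodule.mem_iInf _).mpr fun i => ?_
    have hi : projL (M i) v = v := by
      refine this _ ?_
      rw [hldef, List.mem_ofFn]
      exact ⟨i, rfl⟩
    rw [← hi]; exact projL_mem _ v
  -- set up y and z
  set y : H := ((1 - T) ^ (p - 1)) w with hydef
  set z : H := y - T y with hzdef
  have hzw : ((1 - T) ^ p) w = z := by
    have hp1 : p = (p - 1) + 1 := (Nat.succ_pred_eq_of_pos (by omega)).symm
    rw [hp1, pow_succ']
    rw [ContinuousLinearMap.mul_apply]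
    simp [hzdef, hydef, ContinuousLinearMap.sub_apply]
  have hPMz : PM z = 0 := by
    rw [hzdef, map_sub, hPMT y, sub_self]
  -- decay for z
  have hdec := h z ⟨0, Submodule.zero_mem _, w, by rw [hzw, zero_add]⟩
  have hdec' : Tendsto (fun k : ℕ => (k : ℝ) ^ ((p : ℝ) + ε) * ‖(T ^ k) z‖)
      atTop (nhds 0) := by
    simpa [← hTdef, ← hPMdef, hPMTk, hPMz] using hdec
  -- eventual bound
  obtain ⟨N₀, hN₀⟩ := eventually_atTop.mp (hdec'.eventually_lt_const one_pos)
  set N : ℕ := max N₀ 1 with hNdef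
  have hpR : (2 : ℝ) ≤ (p : ℝ) := by exact_mod_cast hp
  have hbound : ∀ k : ℕ, N ≤ k → ‖(T ^ k) z‖ ≤ (k : ℝ) ^ (-((p : ℝ) + ε)) := by
    intro k hk
    have hk1 : 1 ≤ k := le_trans (le_max_right _ _) hk
    have hkpos : (0 : ℝ) < (k : ℝ) := by exact_mod_cast hk1
    have h1 : (k : ℝ) ^ ((p : ℝ) + ε) * ‖(T ^ k) z‖ ≤ 1 :=
      le_of_lt (hN₀ k (le_trans (le_max_left _ _) hk))
    have h2 : ‖(T ^ k) z‖ =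
        (k : ℝ) ^ (-((p : ℝ) + ε)) * ((k : ℝ) ^ ((p : ℝ) + ε) * ‖(T ^ k) z‖) := by
      rw [← mul_assoc, ← Real.rpow_add hkpos,
        show -((p : ℝ) + ε) + ((p : ℝ) + ε) = 0 by ring, Real.rpow_zero, one_mul]
    rw [h2]
    calc (k : ℝ) ^ (-((p : ℝ) + ε)) * ((k : ℝ) ^ ((p : ℝ) + ε) * ‖(T ^ k) z‖)
        ≤ (k : ℝ) ^ (-((p : ℝ) + ε)) * 1 :=
          mul_le_mul_of_nonneg_left h1 (Real.rpow_nonneg (le_of_lt hkpos) _)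
      _ = (k : ℝ) ^ (-((p : ℝ) + ε)) := mul_one _
  -- summability of norms
  have hsum_pow : Summable (fun k : ℕ => (k : ℝ) ^ (-((p : ℝ) + ε))) :=
    Real.summable_nat_rpow.mpr (by linarith)
  have hsum_norm : Summable (fun k : ℕ => ‖(T ^ k) z‖) := by
    rw [← summable_nat_add_iff N]
    refine Summable.of_nonneg_of_le (fun k => norm_nonneg _)
      (fun k => hbound (k + N) (by omega)) ?_
    exact (summable_nat_add_iff N).mpr hsum_pow
  have hsum_vec : Summable (fun k : ℕ => (T ^ k) z) := hsum_norm.of_norm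
  -- the weighted sequence
  set q : ℝ := ((p : ℝ) - 1) + ε / 2 with hqdef
  have hq0 : 0 ≤ q := by rw [hqdef]; linarith
  set g : ℕ → ℝ := fun j => (j : ℝ) ^ q * ‖(T ^ j) z‖ with hgdef
  have hsum_g : Summable g := by
    rw [← summable_nat_add_iff N]
    refine Summable.of_nonneg_of_le
      (fun k => mul_nonneg (Real.rpow_nonneg (Nat.cast_nonneg _) _) (norm_nonneg _))
      (fun k => ?_)
      ((summable_nat_add_iff N).mpr
        (Real.summable_nat_rpow.mpr (by linarith : -(1 + ε / 2) < -1)))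
    have hk1 : 1 ≤ k + N := by omega
    have hkpos : (0 : ℝ) < ((k + N : ℕ) : ℝ) := by exact_mod_cast hk1
    have hb := hbound (k + N) (by omega)
    calc g (k + N) ≤ ((k + N : ℕ) : ℝ) ^ q * ((k + N : ℕ) : ℝ) ^ (-((p : ℝ) + ε)) := by
          rw [hgdef]
          exact mul_le_mul_of_nonneg_left hb (Real.rpow_nonneg (le_of_lt hkpos) _)
      _ = ((k + N : ℕ) : ℝ) ^ (q + -((p : ℝ) + ε)) := (Real.rpow_add hkpos _ _).symm
      _ = ((k + N : ℕ) : ℝ) ^ (-(1 + ε / 2)) := by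
          congr 1
          rw [hqdef]; ring
  -- telescoping
  have htel : ∀ n : ℕ, (T ^ n) y = y - ∑ j ∈ Finset.range n, (T ^ j) z := by
    intro n
    induction n with
    | zero => simp
    | succ n ih =>
        rw [pow_succ, ContinuousLinearMap.mul_apply]
        have : T y = y - z := by rw [hzdef, sub_sub_cancel]
        rw [this, map_sub, ih, Finset.sum_range_succ]
        abel
  set L : H := y - ∑' j : ℕ, (T ^ j) z with hLdef
  have hLlim : Tendsto (fun n : ℕ => (T ^ n) y) atTop (nhds L) := by
    have h1 : Tendsto (fun n : ℕ => ∑ j ∈ Finset.range n, (T ^ j) z) atTop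
        (nhds (∑' j : ℕ, (T ^ j) z)) := hsum_vec.hasSum.tendsto_sum_nat
    have h2 := (tendsto_const_nhds (x := y) (f := atTop)).sub h1
    simp only [htel]; exact h2
  -- L is fixed by T
  have hTL : T L = L := by
    have h1 : Tendsto (fun n : ℕ => T ((T ^ n) y)) atTop (nhds (T L)) :=
      (T.continuous.tendsto L).comp hLlim
    have h2 : (fun n : ℕ => T ((T ^ n) y)) = fun n : ℕ => (T ^ (n + 1)) y := by
      funext n; rw [pow_succ', ContinuousLinearMap.mul_apply]
    have h3 : Tendsto (fun n : ℕ => (T ^ (n + 1)) y) atTop (nhds L) :=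
      hLlim.comp (tendsto_add_atTop_nat 1)
    rw [h2] at h1
    exact tendsto_nhds_unique h1 h3
  have hLmem : L ∈ Minf := hfixmem L hTL
  have hLPM : L = PM y := by
    have h1 : Tendsto (fun n : ℕ => PM ((T ^ n) y)) atTop (nhds (PM L)) :=
      (PM.continuous.tendsto L).comp hLlim
    have h2 : (fun n : ℕ => PM ((T ^ n) y)) = fun _ => PM y := by
      funext n; exact hPMTk n y
    rw [h2] at h1
    have h3 : PM L = PM y := tendsto_nhds_unique h1 tendsto_const_nhds
    rw [← h3, hPMdef]
    exact (projL_of_mem _ hLmem).symm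
  -- tail identity
  have htail : ∀ n : ℕ, (T ^ n) y - L = ∑' k : ℕ, (T ^ (k + n)) z := by
    intro n
    have hs := Summable.sum_add_tsum_nat_add (f := fun j : ℕ => (T ^ j) z) n hsum_vec
    rw [htel n, hLdef]
    rw [← hs]
    abel
  -- the bound
  have hkey : ∀ n : ℕ, (n : ℝ) ^ q * ‖(T ^ n) y - L‖ ≤ ∑' k : ℕ, g (k + n) := by
    intro n
    have hsn : Summable (fun k : ℕ => ‖(T ^ (k + n)) z‖) :=
      (summable_nat_add_iff n).mpr hsum_norm
    have h1 : ‖(T ^ n) y - L‖ ≤ ∑' k : ℕ, ‖(T ^ (k + n)) z‖ := by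
      rw [htail n]
      exact norm_tsum_le_tsum_norm hsn
    have h2 : (n : ℝ) ^ q * ‖(T ^ n) y - L‖ ≤ (n : ℝ) ^ q * ∑' k : ℕ, ‖(T ^ (k + n)) z‖ :=
      mul_le_mul_of_nonneg_left h1 (Real.rpow_nonneg (Nat.cast_nonneg _) _)
    refine le_trans h2 ?_
    rw [← tsum_mul_left]
    refine Summable.tsum_le_tsum (fun k => ?_) (hsn.mul_left _) ((summable_nat_add_iff n).mpr hsum_g)
    rw [hgdef]
    refine mul_le_mul_of_nonneg_right ?_ (norm_nonneg _)
    refine Real.rpow_le_rpow (Nat.cast_nonneg _) ?_ hq0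
    exact_mod_cast Nat.le_add_left n k
  have htail0 : Tendsto (fun n : ℕ => ∑' k : ℕ, g (k + n)) atTop (nhds 0) :=
    tendsto_sum_nat_add g
  -- translate the goal
  have hxy : ∀ n : ℕ, (T ^ n) x - PM x = (T ^ n) y - L := by
    intro n
    have hx' : x = u + y := hx
    rw [hx', map_add, map_add, hTkfix n u hu, hPMdef, projL_of_mem _ hu, hLPM]
    abel
  have hgoal : Tendsto (fun n : ℕ => (n : ℝ) ^ q * ‖(T ^ n) y - L‖) atTop (nhds 0) :=
    squeeze_zero' (Eventually.of_forall fun n =>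
      mul_nonneg (Real.rpow_nonneg (Nat.cast_nonneg _) _) (norm_nonneg _))
      (Eventually.of_forall hkey) htail0
  have hxy' : ∀ n : ℕ, ‖(T ^ n) x - PM x‖ = ‖(T ^ n) y - L‖ := fun n => by rw [hxy n]
  simpa only [hxy'] using hgoal
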